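/- Let R be a supertropical semiring such that eR is a nontrivial semifield, and let (q,b) be a quadratic pair on an R-module V. Let x, y, w ∈ V be anisotropic. If e·q(x+y) ≠ e·(q(x)+q(y)) and CS(x,w) + CS(y,w) ≠ 0, then CS(x+y, w) < CS(x,w) + CS(y,w) in the totally ordered semifield eR. -/

import Mathlib

open scoped Classical

namespace Supertrop

section Defs

variable (R : Type*) [CommSemiring R]

/-- The distinguished element `e = 1 + 1` of a semiring. -/
def eps : R := 1 + 1

/-- `R` is a supertropical semiring: `e` is additively idempotent, and the two
supertropical addition axioms hold. -/
def IsSupertropical : Prop :=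
  eps R + eps R = eps R ∧
    (∀ x y : R, eps R * x ≠ eps R * y → x + y = x ∨ x + y = y) ∧
    (∀ x y : R, eps R * x = eps R * y → x + y = eps R * y)

/-- The ghost ideal `eR`, as a subset of `R`. -/
def eSet : Set R := Set.range (fun a : R => eps R * a)

/-- The tangible elements `𝒯(R) = R \ eR`. -/
def tangible : Set R := {x : R | x ∉ eSet R}

/-- The nonzero ghost elements `𝒢(R) = eR \ {0}`. -/
def ghost : Set R := eSet R \ {0}

end Defs

section Orders

variable {R : Type*} [CommSemiring R]

/-- The minimal ordering on an additive monoid: `x ≤ y` iff `∃ z, x + z = y`. -/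
def mle {M : Type*} [AddCommMonoid M] (x y : M) : Prop := ∃ z, x + z = y

/-- Strict minimal ordering. -/
def mlt {M : Type*} [AddCommMonoid M] (x y : M) : Prop := mle x y ∧ x ≠ y

/-- The (total) ordering of the bipotent semiring `eR`: `u ≤ v ⟺ u + v = v`. -/
def gle (u v : R) : Prop := u + v = v

/-- The strict ordering of `eR`. -/
def glt (u v : R) : Prop := gle u v ∧ u ≠ v

end Orders

section SSF

variable (R : Type*) [CommSemiring R]

/-- `R` is a supersemifield: supertropical, every tangible element is invertible in `R`,
and `𝒢(R)` is a group under multiplication with identity `e`. -/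
def IsSupersemifield : Prop :=
  IsSupertropical R ∧
    (∀ t ∈ tangible R, IsUnit t) ∧
    eps R ∈ ghost R ∧
    (∀ g ∈ ghost R, ∀ h ∈ ghost R, g * h ∈ ghost R) ∧
    (∀ g ∈ ghost R, ∃ h ∈ ghost R, g * h = eps R)

/-- The supersemifield `R` is tangible: `e·𝒯(R) = 𝒢(R)`. -/
def TangibleSSF : Prop := (fun t => eps R * t) '' tangible R = ghost R

/-- Nontriviality: `𝒢(R) ≠ {e}`. -/
def NontrivialG : Prop := ghost R ≠ {eps R}

/-- `R` is discrete: `𝒢(R)` has a smallest element `> e`. -/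
def DiscreteR : Prop :=
  ∃ c ∈ ghost R, glt (eps R) c ∧ ∀ d ∈ ghost R, glt (eps R) d → gle c d

/-- `R` is dense: `𝒢(R)` has no smallest element `> e`. -/
def DenseR : Prop := ¬ DiscreteR R

/-- `eR` is a semifield: `e ≠ 0`, `𝒢(R)` is closed under multiplication, and every
element of `𝒢(R)` is invertible in `eR` with respect to the identity `e`. -/
def GhostSemifield : Prop :=
  eps R ∈ ghost R ∧
    (∀ g ∈ ghost R, ∀ h ∈ ghost R, g * h ∈ ghost R) ∧
    (∀ g ∈ ghost R, ∃ h ∈ ghost R, g * h = eps R)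

end SSF

section Quad

variable {R : Type*} [CommSemiring R] {V : Type*} [AddCommMonoid V] [Module R V]

/-- `b` is a (symmetric bilinear) companion of the quadratic form `q`. -/
def IsCompanion (q : V → R) (b : V → V → R) : Prop :=
  (∀ x y, b x y = b y x) ∧
    (∀ x y z, b (x + y) z = b x z + b y z) ∧
    (∀ (a : R) (x y : V), b (a • x) y = a * b x y) ∧
    (∀ x y, q (x + y) = q x + q y + b x y)

/-- `(q, b)` is a quadratic pair on `V`. -/
def IsQuadPair (q : V → R) (b : V → V → R) : Prop :=
  (∀ (a : R) (x : V), q (a • x) = a ^ 2 * q x) ∧ IsCompanion q b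

/-- `q` is a quadratic form on `V`. -/
def IsQuadForm (q : V → R) : Prop := ∃ b, IsQuadPair q b

/-- `q` is quasilinear (i.e. additive) on the submodule `W`. -/
def QuasilinearOn (q : V → R) (W : Submodule R V) : Prop :=
  ∀ u ∈ W, ∀ v ∈ W, q (u + v) = q u + q v

/-- `x` is `q`-minimal: `q x' < q x` for every `x' < x` (in the minimal orderings). -/
def QMinimal (q : V → R) (x : V) : Prop := ∀ x' : V, mlt x' x → mlt (q x') (q x)

/-- The maximum of two elements of `R` with respect to the minimal ordering. -/
noncomputable def rsup (a b : R) : R := if a = b then a else a + b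

/-- The componentwise maximum `x ∨ y` (in the minimal ordering) of two vectors
of a free module. -/
noncomputable def vsup {ι : Type*} (bV : Module.Basis ι R V) (x y : V) : V :=
  bV.repr.symm (Finsupp.zipWith rsup (by simp [rsup]) (bV.repr x) (bV.repr y))

/-- The restriction `x(J)` of a vector to a subset `J` of the index set of the base. -/
noncomputable def restrict {ι : Type*} (bV : Module.Basis ι R V) (x : V) (J : Finset ι) : V :=
  ∑ i ∈ J, (bV.repr x) i • bV i

/-- The CS-ratio `CS(x,y) = e·b(x,y)² · (e·q(x)·q(y))⁻¹`, where `inv` is the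
inversion of the semifield `eR`. -/
noncomputable def CSratio (q : V → R) (b : V → V → R) (inv : R → R) (x y : V) : R :=
  eps R * (b x y) ^ 2 * inv (eps R * (q x * q y))

end Quad

/-! The companion identity `q(x+y) = q(x) + q(y) + b(x,y)` together with bipotence forces
`q(x+y) = b(x,y)` and `e(q(x) + q(y)) < e·b(x,y)`. So the denominator of `CS(x+y,w)` strictly
exceeds those of `CS(x,w)` and `CS(y,w)`, while by the Frobenius identity
`e(u+v)² = eu² + ev²` its numerator is the sum of theirs; inversion reverses the order
of `eR`. -/

section GhostOrder

variable {R : Type*} [CommSemiring R]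

theorem eps_mul_eps (hR : IsSupertropical R) : eps R * eps R = eps R :=
  calc eps R * eps R = eps R + eps R := by rw [eps]; ring
    _ = eps R := hR.1

theorem eps_mul_of_mem_eSet (hR : IsSupertropical R) {u : R} (hu : u ∈ eSet R) :
    eps R * u = u := by
  obtain ⟨a, rfl⟩ := hu
  rw [← mul_assoc, eps_mul_eps hR]

theorem mul_mem_eSet {u : R} (hu : u ∈ eSet R) (c : R) : u * c ∈ eSet R := by
  obtain ⟨a, rfl⟩ := hu
  exact ⟨a * c, (mul_assoc _ _ _).symm⟩

theorem eq_zero_of_eps_mul_eq_zero (hR : IsSupertropical R) {a : R} (h : eps R * a = 0) :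
    a = 0 := by
  simpa using hR.2.2 a 0 (by rw [h, mul_zero])

theorem eps_mul_mem_ghost (hR : IsSupertropical R) {a : R} (ha : a ≠ 0) :
    eps R * a ∈ ghost R :=
  ⟨⟨a, rfl⟩, fun h => ha (eq_zero_of_eps_mul_eq_zero hR h)⟩

theorem gle_total_of_mem_eSet (hR : IsSupertropical R) (u : R) {v : R}
    (hv : v ∈ eSet R) : gle u v ∨ gle v u := by
  by_cases h : eps R * u = eps R * v
  · left
    rw [gle, hR.2.2 u v h, eps_mul_of_mem_eSet hR hv]
  · rcases hR.2.1 u v h with h | h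
    · exact Or.inr ((add_comm v u).trans h)
    · exact Or.inl h

theorem add_self_of_mem_eSet (hR : IsSupertropical R) {u : R} (hu : u ∈ eSet R) :
    u + u = u := by
  rw [hR.2.2 u u rfl, eps_mul_of_mem_eSet hR hu]

theorem gle_add_right (hR : IsSupertropical R) {u : R} (hu : u ∈ eSet R) (v : R) :
    gle u (u + v) := by
  rw [gle, ← add_assoc, add_self_of_mem_eSet hR hu]

theorem gle_add_left (hR : IsSupertropical R) (u : R) {v : R} (hv : v ∈ eSet R) :
    gle v (u + v) := by
  rw [add_comm]
  exact gle_add_right hR hv u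

theorem gle_trans {u v w : R} (huv : gle u v) (hvw : gle v w) : gle u w := by
  rw [gle, ← hvw, ← add_assoc, huv]

theorem gle_antisymm {u v : R} (huv : gle u v) (hvu : gle v u) : u = v := by
  rw [← hvu, add_comm]
  exact huv

theorem glt_of_glt_of_gle {u v w : R} (huv : glt u v) (hvw : gle v w) : glt u w :=
  ⟨gle_trans huv.1 hvw, fun h => huv.2 (gle_antisymm huv.1 (h ▸ hvw))⟩

theorem glt_of_gle_of_glt {u v w : R} (huv : gle u v) (hvw : glt v w) : glt u w :=
  ⟨gle_trans huv hvw.1, fun h => hvw.2 (gle_antisymm hvw.1 (h ▸ huv))⟩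

theorem gle_mul_right {u v : R} (h : gle u v) (c : R) : gle (u * c) (v * c) := by
  rw [gle, ← add_mul, h]

theorem gle_mul_left {u v : R} (h : gle u v) (c : R) : gle (c * u) (c * v) := by
  rw [mul_comm c, mul_comm c]
  exact gle_mul_right h c

theorem mem_ghost_of_gle {g u : R} (hg : g ∈ ghost R) (hu : u ∈ eSet R) (h : gle g u) :
    u ∈ ghost R := by
  refine ⟨hu, fun hu0 => hg.2 ?_⟩
  rw [Set.mem_singleton_iff] at hu0 ⊢
  rwa [hu0, gle, add_zero] at h

theorem add_sq_of_mem_eSet (hR : IsSupertropical R) (u : R) {v : R} (hv : v ∈ eSet R) :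
    (u + v) ^ 2 = u ^ 2 + v ^ 2 := by
  have sq_gle {u v : R} (h : gle u v) : gle (u ^ 2) (v ^ 2) := by
    rw [sq, sq]
    exact gle_trans (gle_mul_right h u) (gle_mul_left h v)
  rcases gle_total_of_mem_eSet hR u hv with h | h
  · rw [show u + v = v from h, show u ^ 2 + v ^ 2 = v ^ 2 from sq_gle h]
  · rw [add_comm, show v + u = u from h, add_comm, show v ^ 2 + u ^ 2 = u ^ 2 from sq_gle h]

theorem eps_mul_add_sq (hR : IsSupertropical R) (a c : R) :
    eps R * (a + c) ^ 2 = eps R * a ^ 2 + eps R * c ^ 2 := by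
  have eps_sq : eps R ^ 2 = eps R := by rw [sq, eps_mul_eps hR]
  rw [← eps_sq, ← mul_pow, mul_add, add_sq_of_mem_eSet hR _ ⟨c, rfl⟩, mul_pow,
    mul_pow]

theorem add_eq_right_and_glt_of_eps_mul_add_ne (hR : IsSupertropical R) {s t : R}
    (h : eps R * (s + t) ≠ eps R * s) : s + t = t ∧ glt (eps R * s) (eps R * t) := by
  by_cases hst : eps R * s = eps R * t
  · refine absurd ?_ h
    rw [hR.2.2 s t hst, ← mul_assoc, eps_mul_eps hR, hst]
  · rcases hR.2.1 s t hst with hs | ht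
    · exact absurd (by rw [hs]) h
    · exact ⟨ht, by rw [gle, ← mul_add, ht], hst⟩

end GhostOrder

section GhostInverse

variable {R : Type*} [CommSemiring R]

def IsGhostInverse (inv : R → R) : Prop :=
  ∀ g ∈ ghost R, inv g ∈ ghost R ∧ g * inv g = eps R

variable {inv : R → R}

theorem mul_left_cancel_of_mem_ghost (hR : IsSupertropical R) (hinv : IsGhostInverse inv)
    {g u v : R} (hg : g ∈ ghost R) (hu : u ∈ eSet R) (hv : v ∈ eSet R) (h : g * u = g * v) :
    u = v := by
  have hge := (hinv g hg).2
  calc u = inv g * (g * u) := by rw [← mul_assoc, mul_comm _ g, hge, eps_mul_of_mem_eSet hR hu]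
    _ = inv g * (g * v) := by rw [h]
    _ = v := by rw [← mul_assoc, mul_comm _ g, hge, eps_mul_of_mem_eSet hR hv]

theorem mul_mem_ghost (hR : IsSupertropical R) (hinv : IsGhostInverse inv) {g h : R}
    (hg : g ∈ ghost R) (hh : h ∈ ghost R) : g * h ∈ ghost R := by
  refine ⟨mul_mem_eSet hg.1 h, fun hgh => hh.2 ?_⟩
  rw [Set.mem_singleton_iff] at hgh ⊢
  exact mul_left_cancel_of_mem_ghost hR hinv hg hh.1 ⟨0, mul_zero _⟩ (by rw [hgh, mul_zero])

theorem eps_mul_mul_mem_ghost (hR : IsSupertropical R) (hinv : IsGhostInverse inv)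
    {a c : R} (ha : a ≠ 0) (hc : c ≠ 0) : eps R * (a * c) ∈ ghost R := by
  have h := mul_mem_ghost hR hinv (eps_mul_mem_ghost hR ha) (eps_mul_mem_ghost hR hc)
  rwa [mul_mul_mul_comm, eps_mul_eps hR] at h

theorem glt_mul_left (hR : IsSupertropical R) (hinv : IsGhostInverse inv) {g u v : R}
    (hg : g ∈ ghost R) (hu : u ∈ eSet R) (hv : v ∈ eSet R) (h : glt u v) :
    glt (g * u) (g * v) :=
  ⟨gle_mul_left h.1 g, fun he => h.2 (mul_left_cancel_of_mem_ghost hR hinv hg hu hv he)⟩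

theorem eps_mul_mul_glt (hR : IsSupertropical R) (hinv : IsGhostInverse inv) {a t c : R}
    (hc : c ≠ 0) (h : glt (eps R * a) (eps R * t)) :
    glt (eps R * (a * c)) (eps R * (t * c)) := by
  have h' := glt_mul_left hR hinv (eps_mul_mem_ghost hR hc) ⟨a, rfl⟩ ⟨t, rfl⟩ h
  rwa [mul_mul_mul_comm, mul_mul_mul_comm _ c, eps_mul_eps hR, mul_comm c, mul_comm c] at h'

theorem inv_glt_inv (hR : IsSupertropical R) (hinv : IsGhostInverse inv) {g h : R}
    (hg : g ∈ ghost R) (hh : h ∈ ghost R) (hgh : glt g h) : glt (inv h) (inv g) := by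
  obtain ⟨hig, hge⟩ := hinv g hg
  obtain ⟨hih, hhe⟩ := hinv h hh
  constructor
  · have key := gle_mul_right hgh.1 (inv g * inv h)
    rwa [← mul_assoc, hge, ← mul_assoc, mul_right_comm, hhe, eps_mul_of_mem_eSet hR hih.1,
      eps_mul_of_mem_eSet hR hig.1] at key
  · intro he
    refine hgh.2 (mul_left_cancel_of_mem_ghost hR hinv hig hg.1 hh.1 ?_)
    rw [mul_comm, hge, ← hhe, he, mul_comm]

/-- By bipotence `(A + B) * C₀` is `A * C₀` or `B * C₀`, and each lies strictly below the
corresponding summand on the right (or is `0`). -/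
theorem add_mul_glt_add_mul (hR : IsSupertropical R) (hinv : IsGhostInverse inv)
    {A B C₀ C₁ C₂ : R} (hA : A ∈ eSet R) (hB : B ∈ eSet R) (hC₀ : C₀ ∈ eSet R)
    (hC₁ : C₁ ∈ eSet R) (hC₂ : C₂ ∈ eSet R) (h₁ : glt C₀ C₁) (h₂ : glt C₀ C₂)
    (hS : A * C₁ + B * C₂ ≠ 0) : glt ((A + B) * C₀) (A * C₁ + B * C₂) := by
  have summand {P C : R} (hP : P ∈ eSet R) (hC : C ∈ eSet R) (h : glt C₀ C)
      (hle : gle (P * C) (A * C₁ + B * C₂)) : glt (P * C₀) (A * C₁ + B * C₂) := by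
    rcases eq_or_ne P 0 with rfl | hP0
    · rw [zero_mul]
      exact ⟨zero_add _, hS.symm⟩
    · exact glt_of_glt_of_gle (glt_mul_left hR hinv ⟨hP, hP0⟩ hC₀ hC h) hle
  rcases gle_total_of_mem_eSet hR A hB with hAB | hBA
  · rw [show A + B = B from hAB]
    exact summand hB hC₂ h₂ (gle_add_left hR _ (mul_mem_eSet hB _))
  · rw [add_comm, show B + A = A from hBA]
    exact summand hA hC₁ h₁ (gle_add_right hR (mul_mem_eSet hA _) _)

end GhostInverse

theorem stmt8_general {R : Type*} [CommSemiring R] (hR : IsSupertropical R)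
    (inv : R → R) (hinv : ∀ g ∈ ghost R, inv g ∈ ghost R ∧ g * inv g = eps R)
    {V : Type*} [AddCommMonoid V] [Module R V] (q : V → R) (b : V → V → R)
    (hqb : IsQuadPair q b) (x y w : V)
    (hx : q x ≠ 0) (hy : q y ≠ 0) (hw : q w ≠ 0)
    (hne : eps R * q (x + y) ≠ eps R * (q x + q y))
    (hsum : CSratio q b inv x w + CSratio q b inv y w ≠ 0) :
    glt (CSratio q b inv (x + y) w) (CSratio q b inv x w + CSratio q b inv y w) := by
  obtain ⟨-, -, hb_add, -, hq_add⟩ := hqb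
  obtain ⟨hq_xy, hst⟩ := add_eq_right_and_glt_of_eps_mul_add_ne hR (hq_add x y ▸ hne)
  rw [mul_add] at hst
  have hxw : glt (eps R * (q x * q w)) (eps R * (b x y * q w)) :=
    eps_mul_mul_glt hR hinv hw (glt_of_gle_of_glt (gle_add_right hR ⟨_, rfl⟩ _) hst)
  have hyw : glt (eps R * (q y * q w)) (eps R * (b x y * q w)) :=
    eps_mul_mul_glt hR hinv hw (glt_of_gle_of_glt (gle_add_left hR _ ⟨_, rfl⟩) hst)
  have gx := eps_mul_mul_mem_ghost hR hinv hx hw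
  have gy := eps_mul_mul_mem_ghost hR hinv hy hw
  have gxy := mem_ghost_of_gle gx ⟨_, rfl⟩ hxw.1
  have hCS : CSratio q b inv (x + y) w =
      (eps R * b x w ^ 2 + eps R * b y w ^ 2) * inv (eps R * (b x y * q w)) := by
    rw [CSratio, hb_add, eps_mul_add_sq hR, hq_add, hq_xy]
  rw [hCS]
  exact add_mul_glt_add_mul hR hinv ⟨_, rfl⟩ ⟨_, rfl⟩ (hinv _ gxy).1.1 (hinv _ gx).1.1
    (hinv _ gy).1.1 (inv_glt_inv hR hinv gx gxy hxw) (inv_glt_inv hR hinv gy gxy hyw) hsum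

/-- strict subadditivity of the CS-ratio when `q(x+y)` is not
`ν`-equivalent to `q(x) + q(y)` and `CS(x,w) + CS(y,w) ≠ 0`. -/
theorem stmt8 {R : Type*} [CommSemiring R] (hR : IsSupertropical R)
    (hsf : GhostSemifield R) (hnt : NontrivialG R)
    (inv : R → R) (hinv : ∀ g ∈ ghost R, inv g ∈ ghost R ∧ g * inv g = eps R)
    {V : Type*} [AddCommMonoid V] [Module R V] (q : V → R) (b : V → V → R)
    (hqb : IsQuadPair q b) (x y w : V)
    (hx : q x ≠ 0) (hy : q y ≠ 0) (hw : q w ≠ 0)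
    (hne : eps R * q (x + y) ≠ eps R * (q x + q y))
    (hsum : CSratio q b inv x w + CSratio q b inv y w ≠ 0) :
    glt (CSratio q b inv (x + y) w) (CSratio q b inv x w + CSratio q b inv y w) :=
  stmt8_general hR inv hinv q b hqb x y w hx hy hw hne hsum

end Supertrop
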